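/- arXiv:2201.09688 — 2 statements merged into one kernel-verified Lean document; each statement's English description precedes it below -/
import Mathlib

section
/- With E, M as above, every continuous function f : Z_p → M admits a unique Mahler expansion: there exists a unique sequence (m_n(f)) in M with m_n(f) → 0 such that f(z) = Σ_{n≥0} C(z,n)·m_n(f) for all z ∈ Z_p; moreover m_n(f) = (-1)^n Σ_{i=0}^n (-1)^i C(n,i) f(i). -/
/-!
Evaluating a Mahler expansion at a natural number `k` leaves the finite sum
`f k = ∑ C(k,n) m_n`; Newton's forward difference formula has the same shape with `m_n = Δⁿf(0)`,
and triangularity forces the two to agree, which gives uniqueness and the explicit formula.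

For existence, characteristic `p` gives `Δ^{p^k} g = g(· + p^k) - g` since `p ∣ C(p^k, i)` for
`0 < i < p^k`. The sets `{v ≥ r}` are open subgroups forming a basis at `0`, and by uniform
continuity `Δ^{p^k} f` lands in any one of them for large `k`; hence so does `Δⁿf(0)` for
`n ≥ p^k`, and the series converges. At `z ≡ a (mod p^K)` with `a ∈ ℕ`, Lucas' theorem gives
`C(z,n) ≡ C(a,n) (mod p)` for `n < K`, so the series at `z` differs from the finite expansion of
`f a` by an element of the subgroup, as does `f z` from `f a`.
-/

open Filter Topology Finset Uniformity

/-- The binomial coefficient `C(z,n)` of a `p`-adic integer `z`, reduced modulo `p` and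
viewed in the field `E` of characteristic `p`. -/
noncomputable def binomMod (p : ℕ) [Fact p.Prime] (E : Type*) [Field E] [CharP E p]
    (z : ℤ_[p]) (n : ℕ) : E :=
  ZMod.castHom dvd_rfl E (((z.appr (n + 1)).choose n : ZMod p))

theorem Nat.choose_modEq_choose_of_modEq_pow {p L a b n : ℕ} [Fact p.Prime]
    (hab : a ≡ b [MOD p ^ L]) (hn : n < p ^ L) : a.choose n ≡ b.choose n [MOD p] := by
  have hdigit : ∀ i < L, a / p ^ i % p = b / p ^ i % p := fun i hi => by
    rw [← Nat.mod_mul_right_div_self, ← Nat.mod_mul_right_div_self b, ← pow_succ,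
      ← Nat.mod_mod_of_dvd a (pow_dvd_pow p hi), ← Nat.mod_mod_of_dvd b (pow_dvd_pow p hi), hab]
  have lucas (c : ℕ) :=
    Choose.choose_modEq_choose_mul_prod_range_choose (p := p) (n := c) (k := n) L
  rw [← Int.natCast_modEq_iff]
  refine (lucas a).trans (Int.ModEq.trans ?_ (lucas b).symm)
  rw [Nat.div_eq_of_lt hn, prod_congr rfl fun i hi => by rw [hdigit i (mem_range.mp hi)]]
  simp [Int.ModEq.refl]

section binomMod

variable {p : ℕ} [Fact p.Prime] {E : Type*} [Field E] [CharP E p]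

theorem binomMod_eq_choose_of_sub_mem {z : ℤ_[p]} {a n : ℕ}
    (h : z - a ∈ Ideal.span {(p : ℤ_[p]) ^ (n + 1)}) : binomMod p E z n = a.choose n := by
  have happr : z.appr (n + 1) ≡ a [MOD p ^ (n + 1)] := by
    rw [← ZMod.natCast_eq_natCast_iff]
    exact PadicInt.zmod_congr_of_sub_mem_span _ z _ _ (PadicInt.appr_spec _ z) h
  have hn : n < p ^ (n + 1) :=
    (Nat.lt_succ_self n).trans_le (Nat.lt_pow_self (Fact.out : p.Prime).one_lt).le
  rw [binomMod, (ZMod.natCast_eq_natCast_iff _ _ _).mpr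
    (Nat.choose_modEq_choose_of_modEq_pow happr hn), map_natCast]

theorem binomMod_natCast (a n : ℕ) : binomMod p E a n = a.choose n :=
  binomMod_eq_choose_of_sub_mem (by simp)

theorem binomMod_smul_mem {M : Type*} [AddCommGroup M] [Module E M] {S : AddSubgroup M}
    (z : ℤ_[p]) (n : ℕ) {x : M} (hx : x ∈ S) : binomMod p E z n • x ∈ S := by
  rw [binomMod, map_natCast, Nat.cast_smul_eq_nsmul]
  exact S.nsmul_mem hx _

end binomMod

theorem fwdDiff_iter_one_eq_smul_sum {A M : Type*} [AddCommMonoidWithOne A] [AddCommGroup M]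
    (R : Type*) [CommRing R] [Module R M] (g : A → M) (n : ℕ) (y : A) :
    (fwdDiff 1)^[n] g y =
      (-1 : R) ^ n • ∑ i ∈ range (n + 1), ((-1 : R) ^ i * n.choose i) • g (y + i) := by
  rw [fwdDiff_iter_eq_sum_shift, smul_sum]
  refine sum_congr rfl fun i hi => ?_
  have hsign : n + i = n - i + 2 * i := by have := mem_range_succ_iff.mp hi; omega
  rw [smul_smul, nsmul_one, ← Int.cast_smul_eq_zsmul R, ← mul_assoc, ← pow_add, hsign, pow_add,
    pow_mul]
  push_cast
  simp

theorem fwdDiff_iter_char_pow {A M : Type*} [AddCommMonoidWithOne A] [AddCommGroup M]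
    (R : Type*) [CommRing R] {p : ℕ} [Fact p.Prime] [CharP R p] [Module R M]
    (g : A → M) (k : ℕ) (y : A) :
    (fwdDiff 1)^[p ^ k] g y = g (y + (p ^ k : ℕ)) - g y := by
  have hpk : p ^ k ≠ 0 := pow_ne_zero k (Fact.out : p.Prime).ne_zero
  rw [fwdDiff_iter_one_eq_smul_sum R, sum_eq_add_of_mem 0 (p ^ k) (by simp) (by simp) hpk.symm]
  · simp [neg_one_pow_char_pow R p, sub_eq_neg_add]
  · intro i hi ⟨hi0, hip⟩
    rw [(CharP.cast_eq_zero_iff R p _).mpr ((Fact.out : p.Prime).dvd_choose_pow hi0 hip),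
      mul_zero, zero_smul]

theorem fwdDiff_iter_mem_of_forall_mem {A G : Type*} [AddCommMonoid A] [AddCommGroup G]
    {S : AddSubgroup G} {h : A} {g : A → G} (hg : ∀ y, g y ∈ S) (n : ℕ) (y : A) : (fwdDiff h)^[n] g y ∈ S := by
  induction n generalizing g with
  | zero => exact hg y
  | succ n ih => exact ih (fun y => S.sub_mem (hg _) (hg y))

theorem eq_of_forall_sum_range_choose_nsmul_eq {M : Type*} [AddCancelCommMonoid M] {a b : ℕ → M}
    (h : ∀ k, ∑ n ∈ range (k + 1), k.choose n • a n = ∑ n ∈ range (k + 1), k.choose n • b n) :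
    a = b := by
  funext k
  induction k using Nat.strong_induction_on with
  | _ k ih =>
    have := h k
    rw [sum_range_succ, sum_range_succ, sum_congr rfl fun n hn => by rw [ih n (mem_range.mp hn)],
      add_left_cancel_iff] at this
    simpa using this

theorem PadicInt.exists_sub_mem_of_continuous {p : ℕ} [Fact p.Prime] {G : Type*} [AddGroup G]
    [UniformSpace G] [IsUniformAddGroup G] {f : ℤ_[p] → G} (hf : Continuous f) {U : Set G}
    (hU : U ∈ 𝓝 0) : ∃ k : ℕ, ∀ z w, z - w ∈ Ideal.span {(p : ℤ_[p]) ^ k} → f z - f w ∈ U := by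
  have hV : {q : G × G | q.2 - q.1 ∈ U} ∈ 𝓤 G := by
    rw [uniformity_eq_comap_nhds_zero G]
    exact preimage_mem_comap hU
  obtain ⟨δ, hδ, hfδ⟩ :=
    Metric.mem_uniformity_dist.mp (mem_map.mp (CompactSpace.uniformContinuous_of_continuous hf hV))
  obtain ⟨k, hk⟩ := PadicInt.exists_pow_neg_lt p hδ
  refine ⟨k, fun z w hzw => hfδ ?_⟩
  rw [dist_comm, dist_eq_norm]
  exact ((PadicInt.norm_le_pow_iff_mem_span_pow _ k).mpr hzw).trans_lt hk

theorem NonarchimedeanAddGroup.eq_zero_of_forall_mem {G : Type*} [AddGroup G] [TopologicalSpace G]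
    [NonarchimedeanAddGroup G] [T1Space G] {x : G} (hx : ∀ S : OpenAddSubgroup G, x ∈ S) :
    x = 0 := by
  by_contra hx0
  obtain ⟨S, hS⟩ := is_nonarchimedean _ (isOpen_compl_singleton.mem_nhds (Ne.symm hx0))
  exact hS (hx S) rfl

theorem NonarchimedeanAddGroup.of_valuation {G : Type*} [AddGroup G] [TopologicalSpace G]
    [IsTopologicalAddGroup G] (v : G → EReal) (hv_neg : ∀ x, v (-x) = v x)
    (hv_add : ∀ x y, min (v x) (v y) ≤ v (x + y))
    (hnhds : ∀ s : Set G, s ∈ 𝓝 (0 : G) ↔ ∃ r : ℝ, ∀ x : G, (r : EReal) ≤ v x → x ∈ s) :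
    NonarchimedeanAddGroup G where
  is_nonarchimedean U hU := by
    obtain ⟨r, hr⟩ := (hnhds U).mp hU
    have hball : {x | (r : EReal) ≤ v x} ∈ 𝓝 (0 : G) := (hnhds _).mpr ⟨r, fun _ => id⟩
    let S : AddSubgroup G :=
      { carrier := {x | (r : EReal) ≤ v x}
        zero_mem' := mem_of_mem_nhds hball
        add_mem' := fun ha hb => (le_min ha hb).trans (hv_add _ _)
        neg_mem' := fun {x} hx => by simpa [hv_neg] using hx }
    exact ⟨⟨S, S.isOpen_of_mem_nhds hball⟩, fun x hx => hr x hx⟩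

section Mahler

variable {p : ℕ} [Fact p.Prime] {M : Type*} [AddCommGroup M]

theorem tendsto_fwdDiff_iter_zero (R : Type*) [CommRing R] [CharP R p] [Module R M]
    [UniformSpace M] [IsUniformAddGroup M] [NonarchimedeanAddGroup M] {f : ℤ_[p] → M}
    (hf : Continuous f) : Tendsto (fun n => (fwdDiff 1)^[n] f 0) atTop (𝓝 0) := by
  refine tendsto_def.mpr fun U hU => ?_
  obtain ⟨S, hSU⟩ := NonarchimedeanAddGroup.is_nonarchimedean U hU
  obtain ⟨k, hk⟩ := PadicInt.exists_sub_mem_of_continuous hf S.mem_nhds_zero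
  filter_upwards [eventually_ge_atTop (p ^ k)] with n hn
  apply hSU
  show (fwdDiff 1)^[n] f 0 ∈ (S : Set M)
  rw [← Nat.sub_add_cancel hn, Function.iterate_add_apply]
  refine fwdDiff_iter_mem_of_forall_mem (S := S.toAddSubgroup) (fun z => ?_) _ _
  rw [fwdDiff_iter_char_pow R]
  exact hk _ _ (by simp)

variable {E : Type*} [Field E] [CharP E p] [Module E M]

theorem hasSum_binomMod_natCast_smul [TopologicalSpace M] (m : ℕ → M) (k : ℕ) :
    HasSum (fun n => binomMod p E k n • m n) (∑ n ∈ range (k + 1), k.choose n • m n) := by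
  simp_rw [binomMod_natCast, Nat.cast_smul_eq_nsmul]
  refine hasSum_sum_of_ne_finset_zero fun n hn => ?_
  rw [Nat.choose_eq_zero_of_lt (by simpa using hn), zero_smul]

theorem eq_fwdDiff_iter_of_hasSum [TopologicalSpace M] [T2Space M] {f : ℤ_[p] → M} {m : ℕ → M}
    (hm : ∀ z, HasSum (fun n => binomMod p E z n • m n) (f z)) :
    m = fun n => (fwdDiff 1)^[n] f 0 := by
  refine eq_of_forall_sum_range_choose_nsmul_eq fun k => ?_
  rw [← (hm k).unique (hasSum_binomMod_natCast_smul m k)]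
  simpa using shift_eq_sum_fwdDiff_iter 1 f k 0

theorem summable_binomMod_smul [UniformSpace M] [IsUniformAddGroup M] [NonarchimedeanAddGroup M]
    [CompleteSpace M] {m : ℕ → M} (hm : Tendsto m atTop (𝓝 0)) (z : ℤ_[p]) :
    Summable fun n => binomMod p E z n • m n := by
  refine NonarchimedeanAddGroup.summable_of_tendsto_cofinite_zero ?_
  rw [Nat.cofinite_eq_atTop]
  refine tendsto_def.mpr fun U hU => ?_
  obtain ⟨S, hSU⟩ := NonarchimedeanAddGroup.is_nonarchimedean U hU
  filter_upwards [hm S.mem_nhds_zero] with n hn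
  exact hSU (binomMod_smul_mem (S := S.toAddSubgroup) z n hn)

theorem hasSum_binomMod_smul_fwdDiff_iter [UniformSpace M] [IsUniformAddGroup M]
    [NonarchimedeanAddGroup M] [CompleteSpace M] [T2Space M] {f : ℤ_[p] → M}
    (hf : Continuous f) (z : ℤ_[p]) :
    HasSum (fun n => binomMod p E z n • (fwdDiff 1)^[n] f 0) (f z) := by
  set D := fun n => (fwdDiff 1)^[n] f 0
  have hD : Tendsto D atTop (𝓝 0) := tendsto_fwdDiff_iter_zero E hf
  obtain ⟨F, hF⟩ := summable_binomMod_smul (E := E) hD z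
  suffices f z - F = 0 by rwa [sub_eq_zero.mp this]
  refine NonarchimedeanAddGroup.eq_zero_of_forall_mem fun S => ?_
  obtain ⟨k, hk⟩ := PadicInt.exists_sub_mem_of_continuous hf S.mem_nhds_zero
  obtain ⟨N, hN⟩ := eventually_atTop.mp (hD S.mem_nhds_zero)
  set K := max k N
  set a := z.appr K
  have hza := PadicInt.appr_spec K z
  have hfa : HasSum (fun n => binomMod p E a n • D n) (f a) := by
    have hnewton := shift_eq_sum_fwdDiff_iter (1 : ℤ_[p]) f a 0
    rw [zero_add, nsmul_one] at hnewton
    exact hnewton ▸ hasSum_binomMod_natCast_smul D a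
  have hterm : ∀ n, binomMod p E z n • D n - binomMod p E a n • D n ∈ S := by
    intro n
    rcases lt_or_ge n K with hn | hn
    · rw [binomMod_natCast, binomMod_eq_choose_of_sub_mem, sub_self]
      · exact S.zero_mem
      · exact Ideal.span_singleton_le_span_singleton.mpr (pow_dvd_pow _ hn) hza
    · have hDn : D n ∈ S := hN n (le_of_max_le_right hn)
      exact S.sub_mem (binomMod_smul_mem z n hDn) (binomMod_smul_mem _ n hDn)
  have hFa : F - f a ∈ S := S.isClosed.mem_of_tendsto (hF.sub hfa)
    (.of_forall fun s => sum_mem fun n _ => hterm n)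
  have hfz : f z - f a ∈ S :=
    hk _ _ (Ideal.span_singleton_le_span_singleton.mpr (pow_dvd_pow _ (le_max_left k N)) hza)
  simpa using S.sub_mem hfz hFa

end Mahler

theorem mahler_expansion_exists_unique_general
    {p : ℕ} [Fact p.Prime] {E : Type*} [Field E] [CharP E p]
    {M : Type*} [AddCommGroup M] [Module E M]
    [UniformSpace M] [IsUniformAddGroup M] [CompleteSpace M] [T2Space M]
    (v : M → EReal)
    (hv_smul : ∀ (c : E) (x : M), c ≠ 0 → v (c • x) = v x)
    (hv_add : ∀ x y : M, min (v x) (v y) ≤ v (x + y))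
    (hnhds : ∀ s : Set M, s ∈ 𝓝 (0 : M) ↔ ∃ r : ℝ, ∀ x : M, (r : EReal) ≤ v x → x ∈ s)
    (f : ℤ_[p] → M) (hf : Continuous f) :
    (∃! m : ℕ → M, Tendsto m atTop (𝓝 0) ∧
      ∀ z : ℤ_[p], HasSum (fun n => binomMod p E z n • m n) (f z)) ∧
    (∀ m : ℕ → M, (Tendsto m atTop (𝓝 0) ∧
        ∀ z : ℤ_[p], HasSum (fun n => binomMod p E z n • m n) (f z)) →
      ∀ n : ℕ, m n = (-1 : E) ^ n •
        ∑ i ∈ Finset.range (n + 1), ((-1 : E) ^ i * (n.choose i : E)) • f (i : ℤ_[p])) := by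
  have hv_neg (x : M) : v (-x) = v x := by
    rw [← neg_one_smul E x, hv_smul _ _ (neg_ne_zero.mpr one_ne_zero)]
  have : NonarchimedeanAddGroup M := .of_valuation v hv_neg hv_add hnhds
  refine ⟨⟨_, ⟨tendsto_fwdDiff_iter_zero E hf, hasSum_binomMod_smul_fwdDiff_iter hf⟩,
    fun m hm => eq_fwdDiff_iter_of_hasSum hm.2⟩, fun m hm n => ?_⟩
  rw [eq_fwdDiff_iter_of_hasSum hm.2]
  simpa using fwdDiff_iter_one_eq_smul_sum E f n 0

/-- Mahler's theorem in characteristic `p`: every continuous `f : ℤ_p → M` has a unique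
Mahler expansion `f z = ∑ C(z,n) • m n` with `m n → 0`, and the coefficients are given by
`m n = (-1)^n ∑_{i=0}^n (-1)^i C(n,i) f(i)`. -/
theorem mahler_expansion_exists_unique
    {p : ℕ} [Fact p.Prime] {E : Type*} [Field E] [CharP E p]
    {M : Type*} [AddCommGroup M] [Module E M]
    [UniformSpace M] [IsUniformAddGroup M] [CompleteSpace M] [T2Space M]
    (v : M → EReal)
    (hv_top : ∀ x : M, v x = ⊤ ↔ x = 0)
    (hv_smul : ∀ (c : E) (x : M), c ≠ 0 → v (c • x) = v x)
    (hv_add : ∀ x y : M, min (v x) (v y) ≤ v (x + y))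
    (hnhds : ∀ s : Set M, s ∈ 𝓝 (0 : M) ↔ ∃ r : ℝ, ∀ x : M, (r : EReal) ≤ v x → x ∈ s)
    (f : ℤ_[p] → M) (hf : Continuous f) :
    (∃! m : ℕ → M, Tendsto m atTop (𝓝 0) ∧
      ∀ z : ℤ_[p], HasSum (fun n => binomMod p E z n • m n) (f z)) ∧
    (∀ m : ℕ → M, (Tendsto m atTop (𝓝 0) ∧
        ∀ z : ℤ_[p], HasSum (fun n => binomMod p E z n • m n) (f z)) →
      ∀ n : ℕ, m n = (-1 : E) ^ n •
        ∑ i ∈ Finset.range (n + 1), ((-1 : E) ^ i * (n.choose i : E)) • f (i : ℤ_[p])) :=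
  mahler_expansion_exists_unique_general v hv_smul hv_add hnhds f hf
end

section
/- Let w(X) ∈ X + X²·F_p[[X]] be invertible (under composition) and nontorsion (w^{∘n}(X) ≠ X for all n ≥ 1), and let f(X) ∈ X·F_p[[X]] be separable (f'(X) ≠ 0). If w ∘ f = f ∘ w, then f is invertible under composition, i.e. f'(0) ∈ F_p^×. -/
/-!
Suppose `f'(0) = 0`, i.e. `X² ∣ f`. Modulo `X^(2M-1)`, composing `X + a` with `X + v`, where
`X^M ∣ a` and `X^M ∣ v`, just adds `a` and `v`; so in characteristic `p`, `w^{∘n} ≡ X mod X^M`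
implies `w^{∘np} ≡ X mod X^(2M-1)`. Since `w` is nontorsion, this yields iterates
`V = w^{∘n} = X + u` with `u ≠ 0` of arbitrarily large order `k`. As `V` commutes with `f`,
comparing `V ∘ f = f + u ∘ f ≡ f` with the Taylor expansion `f ∘ V ≡ f + f' u` modulo `X^(2k)`
gives `X^(2k) ∣ f' u`, i.e. `ord f' ≥ k`, which is impossible for large `k` since `f' ≠ 0`.
-/

open PowerSeries

/-- Composition `f ∘ g` of power series (correct whenever `g` has zero constant term). -/
noncomputable def psComp {E : Type*} [CommRing E] (f g : PowerSeries E) : PowerSeries E :=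
  PowerSeries.mk fun n =>
    ∑ j ∈ Finset.range (n + 1), PowerSeries.coeff j f * PowerSeries.coeff n (g ^ j)

namespace PowerSeries

variable {R : Type*} [CommRing R]

theorem psComp_eq_subst (f : R⟦X⟧) {g : R⟦X⟧} (hg : constantCoeff g = 0) :
    psComp f g = f.subst g := by
  ext n
  rw [psComp, coeff_mk, coeff_subst' (HasSubst.of_constantCoeff_zero' hg)]
  refine (finsum_eq_sum_of_support_subset _ fun j hj => ?_).symm
  rw [Finset.coe_range, Set.mem_Iio, Nat.lt_succ_iff]
  by_contra hnj
  apply hj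
  rw [X_pow_dvd_iff.mp (pow_dvd_pow_of_dvd (X_dvd_iff.mpr hg) j) n (not_le.mp hnj), mul_zero]

theorem HasSubst.of_X_pow_dvd {m : ℕ} {a : R⟦X⟧} (hm : m ≠ 0) (ha : X ^ m ∣ a) : HasSubst a :=
  .of_constantCoeff_zero' (X_dvd_iff.mp ((dvd_pow_self X hm).trans ha))

theorem X_pow_mul_dvd_subst {j k : ℕ} {q a : R⟦X⟧} (hq : X ^ k ∣ q) (ha : X ^ j ∣ a) :
    X ^ (j * k) ∣ q.subst a := by
  obtain _ | j := j
  · simp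
  have has : HasSubst a := .of_X_pow_dvd j.succ_ne_zero ha
  obtain ⟨h, rfl⟩ := hq
  rw [subst_mul has, subst_pow has, subst_X has, pow_mul]
  exact (pow_dvd_pow_of_dvd ha k).mul_right _

theorem X_pow_one_dvd_X_add {m : ℕ} {u : R⟦X⟧} (hm : m ≠ 0) (hu : X ^ m ∣ u) : X ^ 1 ∣ X + u := by
  rw [pow_one]
  exact dvd_add dvd_rfl ((dvd_pow_self X hm).trans hu)

theorem X_pow_dvd_derivative {k : ℕ} {q : R⟦X⟧} (hq : X ^ (k + 1) ∣ q) :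
    X ^ k ∣ d⁄dX R q :=
  X_pow_dvd_iff.mpr fun n hn => by
    rw [coeff_derivative, X_pow_dvd_iff.mp hq (n + 1) (by omega), zero_mul]

theorem sq_dvd_aeval_add_sub_sub {A : Type*} [CommRing A] [Algebra R A] (P : Polynomial R)
    (x y : A) :
    y ^ 2 ∣ P.aeval (x + y) - P.aeval x - P.derivative.aeval x * y := by
  obtain ⟨c, hc⟩ := (P.map (algebraMap R A)).exists_mul_sq_add_linear_part_eq_eval_add x y
  rw [Polynomial.derivative_map] at hc
  simp only [Polynomial.eval_map_algebraMap] at hc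
  exact ⟨c, by rw [← hc]; ring⟩

theorem X_pow_dvd_subst_X_add_sub (g : R⟦X⟧) {m : ℕ} {u : R⟦X⟧} (hu : X ^ m ∣ u) :
    X ^ (2 * m) ∣ g.subst (X + u) - g - d⁄dX R g * u := by
  obtain _ | m := m
  · simp
  have hXu := X_pow_one_dvd_X_add m.succ_ne_zero hu
  have has : HasSubst (X + u) := .of_X_pow_dvd one_ne_zero hXu
  -- `g` is a polynomial of degree `< 2m`, whose Taylor expansion is exact modulo `u²`,
  -- plus a multiple of `X^(2m)`.
  set q := X ^ (2 * (m + 1)) * mk fun i => coeff (i + 2 * (m + 1)) g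
  set P := trunc (2 * (m + 1)) g
  have hq : X ^ (2 * (m + 1)) ∣ q.subst (X + u) - q - d⁄dX R q * u := by
    refine dvd_sub (dvd_sub ?_ (dvd_mul_right _ _)) ?_
    · simpa only [one_mul] using X_pow_mul_dvd_subst (dvd_mul_right _ _) hXu
    · have hq' : X ^ (2 * m + 1) ∣ d⁄dX R q := X_pow_dvd_derivative (dvd_mul_right _ _)
      calc X ^ (2 * (m + 1)) ∣ X ^ (2 * m + 1) * X ^ (m + 1) := by
            rw [← pow_add]; exact pow_dvd_pow X (by omega)
        _ ∣ d⁄dX R q * u := mul_dvd_mul hq' hu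
  have hP : X ^ (2 * (m + 1)) ∣ (P : R⟦X⟧).subst (X + u) - (P : R⟦X⟧) - d⁄dX R (P : R⟦X⟧) * u := by
    have hcoe (Q : Polynomial R) : (Q : R⟦X⟧) = Q.aeval X := by
      rw [← subst_coe HasSubst.X', X_subst]
    rw [subst_coe has, derivative_coe, hcoe P, hcoe (Polynomial.derivative P), pow_mul']
    exact (pow_dvd_pow_of_dvd hu 2).trans (sq_dvd_aeval_add_sub_sub P X u)
  rw [eq_X_pow_mul_shift_add_trunc (2 * (m + 1)) g, subst_add has, map_add]
  convert dvd_add hq hP using 1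
  ring

theorem X_pow_dvd_X_add_subst_X_add_sub {M : ℕ} {a v : R⟦X⟧} (ha : X ^ M ∣ a) (hv : X ^ M ∣ v) :
    X ^ (2 * M - 1) ∣ (X + a).subst (X + v) - (X + a + v) := by
  obtain _ | M := M
  · simp
  have has : HasSubst (X + v) := .of_X_pow_dvd one_ne_zero (X_pow_one_dvd_X_add M.succ_ne_zero hv)
  have hav : X ^ (2 * (M + 1) - 1) ∣ d⁄dX R a * v := by
    rw [show 2 * (M + 1) - 1 = M + (M + 1) by omega, pow_add]
    exact mul_dvd_mul (X_pow_dvd_derivative ha) hv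
  have htaylor := (pow_dvd_pow X (Nat.sub_le _ 1)).trans (X_pow_dvd_subst_X_add_sub a hv)
  rw [subst_add has, subst_X has]
  convert dvd_add htaylor hav using 1
  ring

/-- The compositional iterate `w^{∘n}`. -/
noncomputable def substIterate (w : R⟦X⟧) (n : ℕ) : R⟦X⟧ :=
  (fun h => h.subst w)^[n] X

theorem substIterate_succ (w : R⟦X⟧) (n : ℕ) :
    substIterate w (n + 1) = (substIterate w n).subst w :=
  Function.iterate_succ_apply' _ n X

section substIterate

variable {w : R⟦X⟧} (hw : constantCoeff w = 0)
include hw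

theorem constantCoeff_substIterate (n : ℕ) : constantCoeff (substIterate w n) = 0 := by
  induction n with
  | zero => simp [substIterate]
  | succ n ih =>
    rw [substIterate, Function.iterate_succ_apply']
    exact constantCoeff_subst_eq_zero hw _ ih

theorem iterate_subst (n : ℕ) (g : R⟦X⟧) :
    (fun h => h.subst w)^[n] g = g.subst (substIterate w n) := by
  induction n with
  | zero => simp [substIterate]
  | succ n ih =>
    rw [Function.iterate_succ_apply', ih, substIterate_succ,
      subst_comp_subst_apply (.of_constantCoeff_zero' (constantCoeff_substIterate hw n))
        (.of_constantCoeff_zero' hw)]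

theorem substIterate_add (m n : ℕ) :
    substIterate w (m + n) = (substIterate w m).subst (substIterate w n) := by
  rw [substIterate, add_comm, Function.iterate_add_apply, ← substIterate, iterate_subst hw]

theorem subst_substIterate_comm {f : R⟦X⟧} (hf : constantCoeff f = 0)
    (hfw : f.subst w = w.subst f) (n : ℕ) :
    f.subst (substIterate w n) = (substIterate w n).subst f := by
  have hw' : HasSubst w := .of_constantCoeff_zero' hw
  have hf' : HasSubst f := .of_constantCoeff_zero' hf
  induction n with
  | zero => simp [substIterate, subst_X hf']
  | succ n ih =>
    have hW := HasSubst.of_constantCoeff_zero' (constantCoeff_substIterate hw n)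
    rw [substIterate_succ, ← subst_comp_subst_apply hW hw', ih, subst_comp_subst_apply hf' hw',
      hfw, ← subst_comp_subst_apply hw' hf']

theorem X_pow_dvd_substIterate_mul_sub {M n : ℕ} (hM : 1 ≤ M) (hn : X ^ M ∣ substIterate w n - X)
    (k : ℕ) :
    X ^ (2 * M - 1) ∣ substIterate w (n * k) - X - (k : R⟦X⟧) * (substIterate w n - X) := by
  induction k with
  | zero => simp [substIterate]
  | succ k ih =>
    have hnk : X ^ M ∣ substIterate w (n * k) - X := by
      rw [← sub_add_cancel (substIterate w (n * k) - X) _]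
      exact dvd_add ((pow_dvd_pow X (show M ≤ 2 * M - 1 by omega)).trans ih) (hn.mul_left _)
    have hstep := X_pow_dvd_X_add_subst_X_add_sub hnk hn
    rw [add_sub_cancel, add_sub_cancel, ← substIterate_add hw] at hstep
    rw [Nat.mul_succ]
    convert dvd_add hstep ih using 1
    push_cast
    ring

theorem X_pow_dvd_substIterate_mul_char_sub_X (p : ℕ) [CharP R p] {M n : ℕ} (hM : 1 ≤ M)
    (hn : X ^ M ∣ substIterate w n - X) : X ^ (2 * M - 1) ∣ substIterate w (n * p) - X := by
  have hp : (p : R⟦X⟧) = 0 := by rw [← map_natCast C, CharP.cast_eq_zero, map_zero]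
  simpa [hp] using X_pow_dvd_substIterate_mul_sub hw hM hn p

theorem exists_X_pow_dvd_substIterate_sub_X (p : ℕ) [CharP R p] [NeZero p] (hw1 : X ^ 2 ∣ w - X)
    (M : ℕ) : ∃ n, 0 < n ∧ X ^ M ∣ substIterate w n - X := by
  induction M with
  | zero => exact ⟨1, one_pos, one_dvd _⟩
  | succ M ih =>
    by_cases hM : M ≤ 1
    · refine ⟨1, one_pos, (pow_dvd_pow X (show M + 1 ≤ 2 by omega)).trans ?_⟩
      simpa [substIterate, subst_X (.of_constantCoeff_zero' hw)] using hw1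
    obtain ⟨n, hn, hdvd⟩ := ih
    refine ⟨n * p, Nat.mul_pos hn (NeZero.pos p), ?_⟩
    exact (pow_dvd_pow X (show M + 1 ≤ 2 * M - 1 by omega)).trans
      (X_pow_dvd_substIterate_mul_char_sub_X hw p (by omega) hdvd)

end substIterate

theorem order_sub_X_le_order_derivative [NoZeroDivisors R] {f V : R⟦X⟧} (hf : X ^ 2 ∣ f)
    (hV : V ≠ X) (hfV : f.subst V = V.subst f) : (V - X).order ≤ (d⁄dX R f).order := by
  set u := V - X
  have hVu : V = X + u := by ring
  have hu : u ≠ 0 := sub_ne_zero.mpr hV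
  set k := u.order.toNat
  have hk : u.order = k := (coe_toNat_order hu).symm
  have hXu : X ^ k ∣ u := X_pow_order_dvd
  by_contra! hlt
  obtain ⟨d, hd⟩ := ENat.ne_top_iff_exists.mp (hlt.trans_le le_top).ne
  have hcomp : X ^ (2 * k) ∣ u.subst f := by
    simpa [mul_comm] using X_pow_mul_dvd_subst hXu hf
  have htaylor := X_pow_dvd_subst_X_add_sub f hXu
  have hf' : HasSubst f := .of_X_pow_dvd two_ne_zero hf
  rw [← hVu, hfV, hVu, subst_add hf', subst_X hf'] at htaylor
  have hprod : X ^ (2 * k) ∣ d⁄dX R f * u := by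
    convert dvd_sub hcomp htaylor using 1
    ring
  have hle := nat_le_order _ _ (X_pow_dvd_iff.mp hprod)
  rw [order_mul, hk, ← hd] at hle
  rw [hk, ← hd] at hlt
  norm_cast at hle hlt
  omega

end PowerSeries

/-- Lemma of Lubin (lemma `lubnarch`): let `w ∈ X + X²·𝔽_p[[X]]` be invertible and
nontorsion for composition, and let `f ∈ X·𝔽_p[[X]]` be separable (`f' ≠ 0`).
If `w ∘ f = f ∘ w`, then `f` is invertible, i.e. `f'(0) ∈ 𝔽_p^×`. -/
theorem lubin_commuting_separable_invertible
    {p : ℕ} [Fact p.Prime]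
    (w f : PowerSeries (ZMod p))
    (hw0 : PowerSeries.coeff 0 w = 0)
    (hw1 : PowerSeries.coeff 1 w = 1)
    (hwnt : ∀ n : ℕ, 1 ≤ n → (fun h => psComp h w)^[n] (X : PowerSeries (ZMod p)) ≠ X)
    (hf0 : PowerSeries.coeff 0 f = 0)
    (hfsep : ∃ n : ℕ, ((n + 1 : ZMod p)) * PowerSeries.coeff (n + 1) f ≠ 0)
    (hcomm : psComp w f = psComp f w) :
    PowerSeries.coeff 1 f ≠ 0 := by
  intro hf1
  have hw : constantCoeff w = 0 := by rwa [← coeff_zero_eq_constantCoeff_apply]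
  have hf : constantCoeff f = 0 := by rwa [← coeff_zero_eq_constantCoeff_apply]
  have hXw : X ^ 2 ∣ w - X := X_pow_dvd_iff.mpr fun m hm => by
    interval_cases m <;> simp [hw, hw1]
  have hXf : X ^ 2 ∣ f := X_pow_dvd_iff.mpr fun m hm => by interval_cases m <;> assumption
  have hf' : d⁄dX (ZMod p) f ≠ 0 := by
    obtain ⟨n, hn⟩ := hfsep
    exact fun h => hn (by simpa [coeff_derivative, mul_comm] using congr(coeff n $h))
  set d := (d⁄dX (ZMod p) f).order.toNat
  obtain ⟨n, hn, hdvd⟩ := exists_X_pow_dvd_substIterate_sub_X hw p hXw (d + 1)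
  have hWn : substIterate w n ≠ X := by
    simpa [substIterate, psComp_eq_subst _ hw] using hwnt n hn
  have hfW := subst_substIterate_comm hw hf
    (by rw [← psComp_eq_subst _ hw, ← psComp_eq_subst _ hf, hcomm]) n
  have hle := (nat_le_order _ _ (X_pow_dvd_iff.mp hdvd)).trans
    (order_sub_X_le_order_derivative hXf hWn hfW)
  rw [← coe_toNat_order hf'] at hle
  norm_cast at hle
  omega
end
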